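/- arXiv:2005.08496 — 2 statements merged into one kernel-verified Lean document; each statement's English description precedes it below -/
import Mathlib

section
/- Sign of the first Fourier mode coefficient ω_{1,0}: with R > 0, g radially symmetric non-increasing nonnegative on the disk B* of radius R, u₀ = φ₀(|·|) solving -Δu₀ = g in B*, u₀ = 0 on ∂B*, one has ω_{1,0}/(πR) = (2/R)(φ₀'(R))² + g(R)φ₀'(R) = -φ₀'(R)·( (1/(πR²))∫_{B*} g - g(R) ). Hence ω_{1,0} > 0 if and only if πR² g(R) < ∫_{B*} g (given ∫_{B*} g > 0). -/
/-! The coefficient is an explicit rational expression in `p = φ₀'(R)`, `g(R)` and `R`, which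
collapses to `πR((2/R)p² + g(R)p)`. The flux identity `∫_{B*} g = -2πRp` rewrites `2p/R` as minus
the mean `(1/(πR²))∫_{B*} g`, so `ω = πR(-p)(mean g - g(R))`; since `πR > 0` and `-p > 0`, the sign
of `ω` is that of `mean g - g(R)`. -/

open Real

lemma first_mode_bracket_eq {R : ℝ} (hR : R ≠ 0) (p gR : ℝ) :
    -(-(1 / 2) * p ^ 2) / R + (1 / (2 * R)) * p ^ 2 + gR * p - p * (-p / R)
      = (2 / R) * p ^ 2 + gR * p := by
  field_simp
  ring

lemma two_div_mul_sq_add_eq_of_flux {R p Ig : ℝ} (hR : R ≠ 0)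
    (hflux : Ig = -(2 * π * R * p)) (gR : ℝ) :
    (2 / R) * p ^ 2 + gR * p = -p * ((1 / (π * R ^ 2)) * Ig - gR) := by
  rw [hflux]
  field_simp
  ring

lemma mean_sub_pos_iff {R Ig gR : ℝ} (hR : 0 < R) :
    0 < (1 / (π * R ^ 2)) * Ig - gR ↔ π * R ^ 2 * gR < Ig := by
  rw [sub_pos, one_div_mul_eq_div, lt_div_iff₀ (by positivity), mul_comm]

theorem stmt_13_general (R p gR Ig ω : ℝ) (hR : 0 < R) (hp : p < 0)
    (hflux : Ig = -(2 * Real.pi * R * p))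
    (hω : ω = Real.pi * R *
      (-(-(1 / 2) * p ^ 2) / R + (1 / (2 * R)) * p ^ 2 + gR * p
        - p * (-p / R))) :
    ω = Real.pi * R * ((2 / R) * p ^ 2 + gR * p) ∧
    ω = Real.pi * R * (-p * ((1 / (Real.pi * R ^ 2)) * Ig - gR)) ∧
    (0 < ω ↔ Real.pi * R ^ 2 * gR < Ig) := by
  have h₁ : ω = π * R * ((2 / R) * p ^ 2 + gR * p) := by
    rw [hω, first_mode_bracket_eq hR.ne']
  have h₂ : ω = π * R * (-p * ((1 / (π * R ^ 2)) * Ig - gR)) := by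
    rw [h₁, two_div_mul_sq_add_eq_of_flux hR.ne' hflux]
  refine ⟨h₁, h₂, ?_⟩
  have hπR : 0 < π * R := by positivity
  rw [h₂, mul_pos_iff_of_pos_left hπR, mul_pos_iff_of_pos_left (neg_pos.mpr hp),
    mean_sub_pos_iff hR]

/-- sign of the first Fourier mode coefficient `ω_{1,0}`.
Here `p = φ₀'(R) < 0` is the boundary radial derivative of the state on the
disk of radius `R`, `gR = g(R)`, and `Ig = ∫_{B*} g`; the flux identity
gives `Ig = -2πRp`.  The coefficient is
`ω = πR(-Λ₀/R + (1/(2R))p² + gR·p - p·ψ'₁₀(R))` with `Λ₀ = -p²/2` and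
`ψ'₁₀(R) = -p/R`.  Then `ω/(πR) = (2/R)p² + gR·p
= -p((1/(πR²))Ig - gR)`, and (given `0 < Ig`) `ω > 0 ↔ πR²gR < Ig`. -/
theorem stmt_13 (R p gR Ig ω : ℝ) (hR : 0 < R) (hp : p < 0)
    (hflux : Ig = -(2 * Real.pi * R * p)) (hIg : 0 < Ig)
    (hω : ω = Real.pi * R *
      (-(-(1 / 2) * p ^ 2) / R + (1 / (2 * R)) * p ^ 2 + gR * p
        - p * (-p / R))) :
    ω = Real.pi * R * ((2 / R) * p ^ 2 + gR * p) ∧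
    ω = Real.pi * R * (-p * ((1 / (Real.pi * R ^ 2)) * Ig - gR)) ∧
    (0 < ω ↔ Real.pi * R ^ 2 * gR < Ig) :=
  stmt_13_general R p gR Ig ω hR hp hflux hω
end

section
/- Linear growth of mode derivatives: let R > 0, c ∈ L^∞(0,R), and for integer k suppose k²/r² + c(r) ≥ k²/(2r²) on (0,R). Let ψ_k ≥ 0 solve -(1/r)(rψ_k')' = -(k²/r² + c)ψ_k with ψ_k(0)=0, ψ_k(R) = δ > 0. Let y_k(r) = δ (r/R)^{k/√2}, which solves -(1/r)(ry_k')' = -(k²/(2r²)) y_k with y_k(R)=δ. Then ψ_k ≥ y_k on [0,R] fails in general but z_k = ψ_k - y_k satisfies z_k ≤ 0, z_k(R)=0, hence ψ_k'(R) ≥ y_k'(R) = δ k/(√2 R). -/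
open Set Filter Topology

/-! Write `y r = δ (r/R)^α` with `α = k/√2`, so that `(r y')' = α² y / r = (k²/(2r²)) r y`. For
`z = ψ - y` the hypothesis on `c` gives `(r z')' ≥ (k²/(2r²)) r z`, which is positive wherever
`z > 0`. Hence `z` has no positive interior maximum: there `z' = 0`, so `r z'` increases from `0`
to the right of it, and so does `z`. Since `z` vanishes at `0` and `R`, `z ≤ 0` on `[0, R]`; thus
`z` is maximal at `R` from the left, and `z'(R) ≥ 0` is `ψ'(R) ≥ y'(R) = δ k / (√2 R)`. -/

theorem HasDerivAt.nonneg_of_le_left {f : ℝ → ℝ} {f' b : ℝ} (hf : HasDerivAt f f' b)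
    (hle : ∀ᶠ x in 𝓝[<] b, f x ≤ f b) : 0 ≤ f' := by
  refine ge_of_tendsto ((hasDerivAt_iff_tendsto_slope.mp hf).mono_left (nhdsLT_le_nhdsNE b)) ?_
  filter_upwards [hle, self_mem_nhdsWithin] with x hfx hxb
  rw [slope_def_field]
  exact div_nonneg_of_nonpos (sub_nonpos.mpr hfx) (sub_nonpos.mpr (le_of_lt hxb))

theorem hasDerivAt_const_mul_div_rpow (δ R α : ℝ) {r : ℝ} (hr : r ≠ 0) (hR : R ≠ 0) :
    HasDerivAt (fun s => δ * (s / R) ^ α) (α * (δ * (r / R) ^ α) / r) r := by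
  have hrR : r / R ≠ 0 := div_ne_zero hr hR
  refine ((((hasDerivAt_id r).div_const R).rpow_const (p := α) (Or.inl hrR)).const_mul
    δ).congr_deriv ?_
  rw [id, Real.rpow_sub_one hrR]
  field_simp

theorem continuous_const_mul_div_rpow (δ R : ℝ) {α : ℝ} (hα : 0 ≤ α) :
    Continuous fun s : ℝ => δ * (s / R) ^ α :=
  continuous_const.mul ((continuous_id.div_const R).rpow_const fun _ => Or.inr hα)

theorem hasDerivAt_mul_deriv_const_mul_div_rpow (δ R α : ℝ) {r : ℝ} (hr : 0 < r) (hR : R ≠ 0) :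
    HasDerivAt (fun s => s * deriv (fun t => δ * (t / R) ^ α) s)
      (α ^ 2 * (δ * (r / R) ^ α) / r) r := by
  have heq : (fun s => α * (δ * (s / R) ^ α)) =ᶠ[𝓝 r]
      fun s => s * deriv (fun t => δ * (t / R) ^ α) s := by
    filter_upwards [lt_mem_nhds hr] with s hs
    rw [(hasDerivAt_const_mul_div_rpow δ R α hs.ne' hR).deriv]
    field_simp
  refine (((hasDerivAt_const_mul_div_rpow δ R α hr.ne' hR).const_mul α).congr_of_eventuallyEq
    heq.symm).congr_deriv ?_
  ring

theorem hasDerivAt_mul_deriv_sub {ψ y : ℝ → ℝ} {a b x : ℝ}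
    (hψ : ∀ᶠ s in 𝓝 x, DifferentiableAt ℝ ψ s) (hy : ∀ᶠ s in 𝓝 x, DifferentiableAt ℝ y s)
    (hψ' : HasDerivAt (fun s => s * deriv ψ s) a x)
    (hy' : HasDerivAt (fun s => s * deriv y s) b x) :
    HasDerivAt (fun s => s * deriv (fun t => ψ t - y t) s) (a - b) x := by
  refine (hψ'.sub hy').congr_of_eventuallyEq ?_
  filter_upwards [hψ, hy] with s hψs hys
  rw [Pi.sub_apply, deriv_fun_sub hψs hys, mul_sub]

theorem not_isLocalMax_of_hasDerivAt_mul_deriv_pos {z q : ℝ → ℝ} {m : ℝ} (hm : 0 < m)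
    (hzd : ∀ᶠ x in 𝓝 m, DifferentiableAt ℝ z x)
    (hw : ∀ᶠ x in 𝓝 m, HasDerivAt (fun s => s * deriv z s) (q x) x)
    (hq : ∀ᶠ x in 𝓝 m, 0 < q x) : ¬ IsLocalMax z m := by
  intro hmax
  obtain ⟨l, u, ⟨hlm, hmu⟩, hsub⟩ := mem_nhds_iff_exists_Ioo_subset.mp
    (hzd.and (hw.and (hq.and hmax)))
  have hIco : Ico m u ⊆ Ioo l u := fun x hx => ⟨hlm.trans_le hx.1, hx.2⟩
  have hw_mono : StrictMonoOn (fun s => s * deriv z s) (Ico m u) :=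
    strictMonoOn_of_hasDerivWithinAt_pos (convex_Ico m u)
      (fun x hx => (hsub (hIco hx)).2.1.continuousAt.continuousWithinAt)
      (fun x hx => (hsub (hIco (interior_subset hx))).2.1.hasDerivWithinAt)
      (fun x hx => (hsub (hIco (interior_subset hx))).2.2.1)
  have hz'_pos : ∀ x ∈ Ioo m u, 0 < deriv z x := by
    intro x hx
    have hwx := hw_mono ⟨le_rfl, hmu⟩ (Ioo_subset_Ico_self hx) hx.1
    simp only [hmax.deriv_eq_zero, mul_zero] at hwx
    exact pos_of_mul_pos_right hwx (hm.trans hx.1).le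
  have hz_mono : StrictMonoOn z (Ico m u) :=
    strictMonoOn_of_deriv_pos (convex_Ico m u)
      (fun x hx => (hsub (hIco hx)).1.continuousAt.continuousWithinAt)
      (fun x hx => hz'_pos x (by simpa using hx))
  have hmid : (m + u) / 2 ∈ Ioo m u := ⟨by linarith, by linarith⟩
  exact (hz_mono ⟨le_rfl, hmu⟩ (Ioo_subset_Ico_self hmid) hmid.1).not_ge
    (hsub (Ioo_subset_Ioo_left hlm.le hmid)).2.2.2

theorem nonpos_of_hasDerivAt_mul_deriv_pos {z q : ℝ → ℝ} {a b : ℝ} (ha : 0 ≤ a)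
    (hzc : ContinuousOn z (Icc a b)) (hza : z a ≤ 0) (hzb : z b ≤ 0)
    (hzd : ∀ x ∈ Ioo a b, DifferentiableAt ℝ z x)
    (hw : ∀ x ∈ Ioo a b, HasDerivAt (fun s => s * deriv z s) (q x) x)
    (hq : ∀ x ∈ Ioo a b, 0 < z x → 0 < q x) :
    ∀ x ∈ Icc a b, z x ≤ 0 := by
  by_contra! ⟨p, hp, hzp⟩
  obtain ⟨m, hm, hmax⟩ := isCompact_Icc.exists_isMaxOn ⟨p, hp⟩ hzc
  have hzm : 0 < z m := hzp.trans_le (hmax hp)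
  have hmI : m ∈ Ioo a b :=
    ⟨lt_of_le_of_ne hm.1 (by rintro rfl; linarith), lt_of_le_of_ne hm.2 (by rintro rfl; linarith)⟩
  have hnhds : Ioo a b ∈ 𝓝 m := isOpen_Ioo.mem_nhds hmI
  have hz_pos : ∀ᶠ x in 𝓝 m, 0 < z x :=
    (hzc.continuousAt (mem_of_superset hnhds Ioo_subset_Icc_self)).eventually
      (eventually_gt_nhds hzm)
  refine not_isLocalMax_of_hasDerivAt_mul_deriv_pos (ha.trans_lt hmI.1)
    (eventually_of_mem hnhds hzd) (eventually_of_mem hnhds hw) ?_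
    (hmax.isLocalMax (mem_of_superset hnhds Ioo_subset_Icc_self))
  filter_upwards [hnhds, hz_pos] with x hx hzx using hq x hx hzx

theorem div_lt_mul_mul_of_lt {a V x u v : ℝ} (ha : 0 < a) (hx : 0 < x) (hV : a / x ^ 2 ≤ V)
    (hu : 0 ≤ u) (hvu : v < u) : a * v / x < V * x * u :=
  calc a * v / x = a / x ^ 2 * x * v := by field_simp
    _ < a / x ^ 2 * x * u := by gcongr
    _ ≤ V * x * u := by gcongr

theorem stmt_16_general (R δ : ℝ) (hR : 0 < R) (c : ℝ → ℝ)
    (k : ℕ) (hk : 1 ≤ k)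
    (hpos : ∀ r ∈ Ioo 0 R,
      (k : ℝ) ^ 2 / (2 * r ^ 2) ≤ (k : ℝ) ^ 2 / r ^ 2 + c r)
    (ψk : ℝ → ℝ)
    (hψkc : ContinuousOn ψk (Icc 0 R))
    (hψksm : ∀ r ∈ Ioo 0 R, ContDiffAt ℝ 2 ψk r)
    (hodek : ∀ r ∈ Ioo 0 R,
      HasDerivAt (fun s => s * deriv ψk s)
        (((k : ℝ) ^ 2 / r ^ 2 + c r) * r * ψk r) r)
    (h0 : ψk 0 = 0) (hbR : ψk R = δ)
    (hψkpos : ∀ r ∈ Icc 0 R, 0 ≤ ψk r)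
    (hdiffR : DifferentiableAt ℝ ψk R) :
    (∀ r ∈ Icc 0 R, ψk r ≤ δ * (r / R) ^ ((k : ℝ) / Real.sqrt 2)) ∧
      δ * k / (Real.sqrt 2 * R) ≤ deriv ψk R := by
  have hα : 0 < (k : ℝ) / Real.sqrt 2 := by positivity
  set α := (k : ℝ) / Real.sqrt 2
  have hV : ∀ r ∈ Ioo 0 R, α ^ 2 / r ^ 2 ≤ (k : ℝ) ^ 2 / r ^ 2 + c r := fun r hr => by
    rw [div_pow, Real.sq_sqrt zero_le_two, div_div]
    exact hpos r hr
  set y : ℝ → ℝ := fun r => δ * (r / R) ^ α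
  have hyR : y R = δ := by simp [y, div_self hR.ne']
  have hyd : ∀ r, 0 < r → HasDerivAt y (α * y r / r) r := fun r hr =>
    hasDerivAt_const_mul_div_rpow δ R α hr.ne' hR.ne'
  have hψd : ∀ r ∈ Ioo 0 R, DifferentiableAt ℝ ψk r := fun r hr =>
    (hψksm r hr).differentiableAt (by norm_num)
  have hle : ∀ r ∈ Icc 0 R, ψk r - y r ≤ 0 := by
    refine nonpos_of_hasDerivAt_mul_deriv_pos le_rfl
      (hψkc.sub (continuous_const_mul_div_rpow δ R hα.le).continuousOn)
      (by simp [y, h0, Real.zero_rpow hα.ne']) (by simp [hbR, hyR])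
      (fun x hx => (hψd x hx).sub (hyd x hx.1).differentiableAt) (fun x hx => ?_)
      fun x hx hzx => sub_pos.mpr <| div_lt_mul_mul_of_lt (by positivity) hx.1 (hV x hx)
        (hψkpos x (Ioo_subset_Icc_self hx)) (sub_pos.mp hzx)
    have hnhds : Ioo 0 R ∈ 𝓝 x := isOpen_Ioo.mem_nhds hx
    exact hasDerivAt_mul_deriv_sub (eventually_of_mem hnhds hψd)
      (eventually_of_mem hnhds fun s hs => (hyd s hs.1).differentiableAt) (hodek x hx)
      (hasDerivAt_mul_deriv_const_mul_div_rpow δ R α hx.1 hR.ne')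
  refine ⟨fun r hr => sub_nonpos.mp (hle r hr), ?_⟩
  have hzR := (hdiffR.hasDerivAt.sub (hyd R hR)).nonneg_of_le_left (by
    filter_upwards [Ioo_mem_nhdsLT hR] with x hx
    change ψk x - y x ≤ ψk R - y R
    rw [hbR, hyR, sub_self]
    exact hle x (Ioo_subset_Icc_self hx))
  have hslope : α * y R / R = δ * k / (Real.sqrt 2 * R) := by simp only [hyR, α]; field_simp
  linarith

/-- linear growth of mode derivatives.  Under the assumption
`k²/r² + c(r) ≥ k²/(2r²)` on `(0,R)`, the nonnegative solution `ψ_k` of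
`-(1/r)(rψ_k')' = -(k²/r² + c)ψ_k` with `ψ_k(0) = 0`, `ψ_k(R) = δ > 0` is
dominated by the explicit supersolution `y_k(r) = δ (r/R)^{k/√2}` (which
solves `-(1/r)(ry_k')' = -(k²/(2r²)) y_k`, `y_k(R) = δ`): one has
`ψ_k - y_k ≤ 0` on `[0,R]`, hence `ψ_k'(R) ≥ y_k'(R) = δ k/(√2 R)`. -/
theorem stmt_16 (R δ : ℝ) (hR : 0 < R) (hδ : 0 < δ) (c : ℝ → ℝ)
    (k : ℕ) (hk : 1 ≤ k)
    (hpos : ∀ r ∈ Ioo 0 R,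
      (k : ℝ) ^ 2 / (2 * r ^ 2) ≤ (k : ℝ) ^ 2 / r ^ 2 + c r)
    (ψk : ℝ → ℝ)
    (hψkc : ContinuousOn ψk (Icc 0 R))
    (hψksm : ∀ r ∈ Ioo 0 R, ContDiffAt ℝ 2 ψk r)
    (hodek : ∀ r ∈ Ioo 0 R,
      HasDerivAt (fun s => s * deriv ψk s)
        (((k : ℝ) ^ 2 / r ^ 2 + c r) * r * ψk r) r)
    (h0 : ψk 0 = 0) (hbR : ψk R = δ)
    (hψkpos : ∀ r ∈ Icc 0 R, 0 ≤ ψk r)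
    (hdiffR : DifferentiableAt ℝ ψk R) :
    (∀ r ∈ Icc 0 R, ψk r ≤ δ * (r / R) ^ ((k : ℝ) / Real.sqrt 2)) ∧
      δ * k / (Real.sqrt 2 * R) ≤ deriv ψk R :=
  stmt_16_general R δ hR c k hk hpos ψk hψkc hψksm hodek h0 hbR hψkpos hdiffR
end
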